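/- Let m, n ≥ 1, T = {0,1}, L = {H^2_0, V^2_1}. Then the number of L-dappled tilings of G_{m,n} is at least 2^{⌈m/2⌉⌈n/2⌉}, and this bound is witnessed by draughtboard tilings which are pairwise distinct whenever their values on the cells {(2k,2l)} differ. -/

import Mathlib

/-!
The draughtboard tiling with free values `c` on the cells `(2k, 2l)` takes different values on
the two cells of every horizontal or vertical domino `{2t, 2t + 1}`. Any three consecutive cells
of a row or column contain such a domino, so no three of them are equal, and the tiling is
`L`-dappled. Reading the tiling off on the cells `(2k, 2l)` recovers `c`, so distinct choices
give distinct tilings.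
-/

/-- `L`-dappled for `L = {H²₀, V²₁}`: no three horizontally consecutive `0`'s
and no three vertically consecutive `1`'s. -/
def Dap (m n : ℕ) (f : ℕ → ℕ → Fin 2) : Prop :=
  ∀ i < m, ∀ j < n,
    ¬(2 ≤ i ∧ f i j = 0 ∧ f (i-1) j = 0 ∧ f (i-2) j = 0) ∧
    ¬(2 ≤ j ∧ f i j = 1 ∧ f i (j-1) = 1 ∧ f i (j-2) = 1)

def draughtboard (c : ℕ → ℕ → Fin 2) (i j : ℕ) : Fin 2 :=
  if i % 2 = j % 2 then c (i / 2) (j / 2) else 1 - c (i / 2) (j / 2)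

section Draughtboard

variable (c : ℕ → ℕ → Fin 2) (k l : ℕ)

@[simp]
lemma draughtboard_even_even : draughtboard c (2 * k) (2 * l) = c k l := by
  simp [draughtboard]

@[simp]
lemma draughtboard_odd_odd : draughtboard c (2 * k + 1) (2 * l + 1) = c k l := by
  simp [draughtboard, show (2 * k + 1) / 2 = k by omega, show (2 * l + 1) / 2 = l by omega]

@[simp]
lemma draughtboard_odd_even : draughtboard c (2 * k + 1) (2 * l) = 1 - c k l := by
  simp [draughtboard, show (2 * k + 1) / 2 = k by omega]

@[simp]
lemma draughtboard_even_odd : draughtboard c (2 * k) (2 * l + 1) = 1 - c k l := by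
  simp [draughtboard, show (2 * l + 1) / 2 = l by omega]

end Draughtboard

lemma fin_two_ne_one_sub_self (a : Fin 2) : a ≠ 1 - a := by
  fin_cases a <;> decide

lemma draughtboard_col_ne (c : ℕ → ℕ → Fin 2) (t j : ℕ) :
    draughtboard c (2 * t) j ≠ draughtboard c (2 * t + 1) j := by
  obtain ⟨l, rfl | rfl⟩ := Nat.even_or_odd' j
  · simpa using fin_two_ne_one_sub_self (c t l)
  · simpa using (fin_two_ne_one_sub_self (c t l)).symm

lemma draughtboard_row_ne (c : ℕ → ℕ → Fin 2) (i t : ℕ) :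
    draughtboard c i (2 * t) ≠ draughtboard c i (2 * t + 1) := by
  obtain ⟨k, rfl | rfl⟩ := Nat.even_or_odd' i
  · simpa using fin_two_ne_one_sub_self (c k t)
  · simpa using (fin_two_ne_one_sub_self (c k t)).symm

lemma not_three_eq_of_pairs_ne {α : Type*} {g : ℕ → α} (hg : ∀ t, g (2 * t) ≠ g (2 * t + 1))
    {i : ℕ} (hi : 2 ≤ i) : ¬(g i = g (i - 1) ∧ g (i - 1) = g (i - 2)) := by
  rintro ⟨h₁, h₂⟩
  obtain ⟨k, rfl | rfl⟩ := Nat.even_or_odd' i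
  · have := hg (k - 1)
    rw [show 2 * (k - 1) + 1 = 2 * k - 1 by omega, show 2 * (k - 1) = 2 * k - 2 by omega] at this
    exact this h₂.symm
  · exact hg k (by simpa using h₁.symm)

lemma dap_of_pairs_ne {m n : ℕ} {f : ℕ → ℕ → Fin 2}
    (hcol : ∀ t j, f (2 * t) j ≠ f (2 * t + 1) j) (hrow : ∀ i t, f i (2 * t) ≠ f i (2 * t + 1)) :
    Dap m n f := by
  intro i _ j _
  constructor
  · rintro ⟨hi, h₀, h₁, h₂⟩
    exact not_three_eq_of_pairs_ne (g := (f · j)) (hcol · j) hi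
      ⟨h₀.trans h₁.symm, h₁.trans h₂.symm⟩
  · rintro ⟨hj, h₀, h₁, h₂⟩
    exact not_three_eq_of_pairs_ne (hrow i) hj ⟨h₀.trans h₁.symm, h₁.trans h₂.symm⟩

lemma dap_draughtboard (m n : ℕ) (c : ℕ → ℕ → Fin 2) : Dap m n (draughtboard c) :=
  dap_of_pairs_ne (draughtboard_col_ne c) (draughtboard_row_ne c)

lemma Dap.congr {m n : ℕ} {f g : ℕ → ℕ → Fin 2} (hf : Dap m n f)
    (h : ∀ i < m, ∀ j < n, f i j = g i j) : Dap m n g := by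
  intro i hi j hj
  rw [← h i hi j hj, ← h (i - 1) (by omega) j hj, ← h (i - 2) (by omega) j hj,
    ← h i hi (j - 1) (by omega), ← h i hi (j - 2) (by omega)]
  exact hf i hi j hj

lemma two_pow_le_card_dap (m n : ℕ) (hm : 1 ≤ m) (hn : 1 ≤ n) :
    2 ^ (((m + 1) / 2) * ((n + 1) / 2)) ≤
      Nat.card {f : Fin m → Fin n → Fin 2 //
        Dap m n (fun i j => f ⟨i % m, Nat.mod_lt i hm⟩ ⟨j % n, Nat.mod_lt j hn⟩)} := by
  set a := (m + 1) / 2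
  set b := (n + 1) / 2
  let extend (c : Fin a → Fin b → Fin 2) (k l : ℕ) : Fin 2 :=
    if h : k < a ∧ l < b then c ⟨k, h.1⟩ ⟨l, h.2⟩ else 0
  set S := {f : Fin m → Fin n → Fin 2 //
    Dap m n (fun i j => f ⟨i % m, Nat.mod_lt i hm⟩ ⟨j % n, Nat.mod_lt j hn⟩)}
  let tiling (c : Fin a → Fin b → Fin 2) : S :=
    ⟨fun i j => draughtboard (extend c) i j,
      (dap_draughtboard m n (extend c)).congr fun i hi j hj => by
        simp [Nat.mod_eq_of_lt hi, Nat.mod_eq_of_lt hj]⟩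
  let evenCells (f : S) (k : Fin a) (l : Fin b) : Fin 2 := f.1 ⟨2 * k, by omega⟩ ⟨2 * l, by omega⟩
  have hleft : Function.LeftInverse evenCells tiling := fun c => by
    funext k l; simp [evenCells, tiling, extend]
  calc 2 ^ (a * b) = Nat.card (Fin a → Fin b → Fin 2) := by simp [pow_mul']
    _ ≤ _ := Nat.card_le_card_of_injective tiling hleft.injective

/-- There are at least `2^{⌈m/2⌉⌈n/2⌉}` `L`-dappled tilings of `G_{m,n}` for
`L = {H²₀, V²₁}`, witnessed by draughtboard tilings which are pairwise distinct
whenever their values on the cells `(2k,2l)` differ. -/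
theorem stmt19 (m n : ℕ) (hm : 1 ≤ m) (hn : 1 ≤ n) :
    2 ^ (((m + 1) / 2) * ((n + 1) / 2)) ≤
      Nat.card {f : Fin m → Fin n → Fin 2 //
        Dap m n (fun i j => f ⟨i % m, Nat.mod_lt i hm⟩ ⟨j % n, Nat.mod_lt j hn⟩)} ∧
    ∃ db : (ℕ → ℕ → Fin 2) → (ℕ → ℕ → Fin 2),
      (∀ c, Dap m n (db c)) ∧
      (∀ c k l, 2*k < m → 2*l < n → db c (2*k) (2*l) = c k l) ∧
      (∀ c k l, 2*k+1 < m → 2*l+1 < n → db c (2*k+1) (2*l+1) = c k l) ∧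
      (∀ c k l, 2*k+1 < m → 2*l < n → db c (2*k+1) (2*l) = 1 - c k l) ∧
      (∀ c k l, 2*k < m → 2*l+1 < n → db c (2*k) (2*l+1) = 1 - c k l) ∧
      (∀ c c', db c = db c' → ∀ k l, 2*k < m → 2*l < n → c k l = c' k l) :=
  ⟨two_pow_le_card_dap m n hm hn, draughtboard, dap_draughtboard m n,
    fun c k l _ _ => draughtboard_even_even c k l, fun c k l _ _ => draughtboard_odd_odd c k l,
    fun c k l _ _ => draughtboard_odd_even c k l, fun c k l _ _ => draughtboard_even_odd c k l,
    fun c c' h k l _ _ => by simpa using congrFun (congrFun h (2 * k)) (2 * l)⟩
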